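/- Let (Yᵢ) be i.i.d. random variables on a probability space (Ω, Σ, ℙ) with values in an ℝ-tree T, and assume Supp((Y₁)_*ℙ) has diameter at most D. Let aₙ := d_T(E(sₙ), b(ν)) where ν = (Y₁)_*ℙ, sₙ is the inductive-mean map on Tⁿ, and b(ν) the barycenter of ν. Then aₙ² ≤ 4D²/n. -/

import Mathlib

/-!
In an ℝ-tree every point `z` has a projection `γ u` onto a geodesic `γ`, and the geodesic from `z`
to any point of `γ` passes through it (concatenate the two geodesics: the result is a simple path,
hence a geodesic). This tripod picture gives the CAT(0) inequality
`d(z, γ t)² ≤ (1 - t) d(z, γ 0)² + t d(z, γ 1)² - t (1 - t) d(γ 0, γ 1)²`, the convexity of the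
metric and the uniqueness of geodesics, so the inductive mean is a well-defined `1`-Lipschitz map.

Integrating the CAT(0) inequality at the barycenter `b` gives the variance inequality
`∫ d(b, y)² + d(b, p)² ≤ ∫ d(p, y)²`. Combining both inequalities with Fubini gives Sturm's
recursion `Eₖ₊₁ ≤ (1 - t)² Eₖ + t² V` for `Eₖ = ∫ d(b, sₖ)²`, `t = 1 / (k + 1)` and
`V = ∫ d(b, y)² ≤ D²`, whence `Eₙ ≤ V / n`. Finally `d(bₙ, b)² ≤ 2 ∫ d(bₙ, ·)² + 2 ∫ d(b, ·)²`
against the law of `sₙ`, and the first integral is at most the second since `bₙ` is a barycenter.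
-/

open MeasureTheory Metric

/-- A geodesic parametrized proportionally to arclength on `[0,1]`. -/
def IsGeodesic {N : Type*} [MetricSpace N] (γ : ℝ → N) : Prop :=
  ∀ s ∈ Set.Icc (0:ℝ) 1, ∀ t ∈ Set.Icc (0:ℝ) 1,
    dist (γ s) (γ t) = |s - t| * dist (γ 0) (γ 1)

/-- Any two points are joined by a geodesic. -/
def GeodesicSpace (N : Type*) [MetricSpace N] : Prop :=
  ∀ x y : N, ∃ γ : ℝ → N, IsGeodesic γ ∧ γ 0 = x ∧ γ 1 = y

/-- A CAT(0)-space: a geodesic space satisfying the CAT(0) comparison inequality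
(completeness is imposed separately as an instance). -/
def CAT0 (N : Type*) [MetricSpace N] : Prop :=
  GeodesicSpace N ∧ ∀ (x : N) (γ : ℝ → N), IsGeodesic γ →
    dist x (γ (1/2)) ^ 2 ≤
      (1/2) * dist x (γ 0) ^ 2 + (1/2) * dist x (γ 1) ^ 2
        - (1/4) * dist (γ 0) (γ 1) ^ 2


/-- `IsInductiveMean n x s` : `s` is the inductive mean value of the `n+1` points
`x 0, …, x n`, defined recursively by geodesic interpolation:
`s₁ = y₁` and `sₖ = γ(1/k)` where `γ` is the geodesic from `sₖ₋₁` to `yₖ`. -/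
def IsInductiveMean {N : Type*} [MetricSpace N] : (n : ℕ) → (Fin (n+1) → N) → N → Prop
  | 0 => fun x s => s = x 0
  | n+1 => fun x s => ∃ s', IsInductiveMean n (fun i => x i.castSucc) s' ∧
      ∃ γ : ℝ → N, IsGeodesic γ ∧ γ 0 = s' ∧ γ 1 = x (Fin.last (n+1)) ∧
        s = γ (1 / (n+2))

/-- An ℝ-tree: a geodesic space (completeness is imposed separately) in which the image
of every simple path is the image of a geodesic. -/
def IsRTree (T : Type*) [MetricSpace T] : Prop :=
  GeodesicSpace T ∧ ∀ f : ℝ → T, ContinuousOn f (Set.Icc 0 1) →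
    Set.InjOn f (Set.Icc 0 1) →
    ∃ γ : ℝ → T, IsGeodesic γ ∧ f '' Set.Icc 0 1 = γ '' Set.Icc 0 1

/-- The support of a Borel measure on a metric space. -/
def msupport {N : Type*} [MetricSpace N] [MeasurableSpace N] (ν : Measure N) : Set N :=
  {x | ∀ ε > 0, 0 < ν (Metric.ball x ε)}

open Set Filter Topology

namespace IsGeodesic

variable {N : Type*} [MetricSpace N] {γ : ℝ → N}

lemma dist_left (h : IsGeodesic γ) {t : ℝ} (ht : t ∈ Icc (0:ℝ) 1) :
    dist (γ 0) (γ t) = t * dist (γ 0) (γ 1) := by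
  rw [h 0 (left_mem_Icc.2 zero_le_one) t ht, zero_sub, abs_neg, abs_of_nonneg ht.1]

lemma continuousOn (h : IsGeodesic γ) : ContinuousOn γ (Icc 0 1) :=
  (LipschitzOnWith.of_dist_le_mul (K := (dist (γ 0) (γ 1)).toNNReal) fun s hs t ht => by
    rw [h s hs t ht, Real.coe_toNNReal _ dist_nonneg, Real.dist_eq, mul_comm]).continuousOn

lemma injOn (h : IsGeodesic γ) (hne : γ 0 ≠ γ 1) : InjOn γ (Icc 0 1) := fun s hs t ht hst => by
  have hd := h s hs t ht
  rw [hst, dist_self, eq_comm, mul_eq_zero, abs_eq_zero, sub_eq_zero] at hd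
  exact hd.resolve_right (dist_ne_zero.2 hne)

lemma comp_lineMap (h : IsGeodesic γ) {a b : ℝ} (ha : a ∈ Icc (0:ℝ) 1) (hb : b ∈ Icc (0:ℝ) 1) :
    IsGeodesic (γ ∘ AffineMap.lineMap a b) := fun s hs t ht => by
  have hmem : ∀ r ∈ Icc (0:ℝ) 1, AffineMap.lineMap a b r ∈ Icc (0:ℝ) 1 :=
    fun r hr => (convex_Icc 0 1).lineMap_mem ha hb hr
  simp only [Function.comp_apply, AffineMap.lineMap_apply_zero, AffineMap.lineMap_apply_one]
  rw [h _ (hmem s hs) _ (hmem t ht), h a ha b hb, ← Real.dist_eq, dist_lineMap_lineMap,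
    Real.dist_eq, Real.dist_eq, abs_sub_comm a, mul_assoc]

def toPath (h : IsGeodesic γ) : Path (γ 0) (γ 1) where
  toFun t := γ t
  continuous_toFun := h.continuousOn.comp_continuous continuous_subtype_val Subtype.prop
  source' := rfl
  target' := rfl

end IsGeodesic

lemma abs_sub_le_of_mem_Icc {u t : ℝ} (hu : u ∈ Icc (0:ℝ) 1) (ht : t ∈ Icc (0:ℝ) 1) :
    |u - t| ≤ (1 - t) * u + t * (1 - u) :=
  abs_le.2 ⟨by nlinarith [mul_nonneg hu.1 (sub_nonneg.2 ht.2)],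
    by nlinarith [mul_nonneg ht.1 (sub_nonneg.2 hu.2)]⟩

namespace IsRTree

variable {T : Type*} [MetricSpace T]

lemma dist_add_dist_of_injective (hT : IsRTree T) {x y : T} (p : Path x y)
    (hp : Function.Injective p) {a b c : unitInterval} (hab : a ≤ b) (hbc : b ≤ c) :
    dist (p a) (p b) + dist (p b) (p c) = dist (p a) (p c) := by
  have hinj : InjOn p.extend (Icc 0 1) := fun r hr r' hr' h => by
    rw [p.extend_apply hr, p.extend_apply hr'] at h
    exact congrArg Subtype.val (hp h)
  obtain ⟨γ, hγ, himg⟩ := hT.2 p.extend p.continuous_extend.continuousOn hinj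
  -- on the image of `γ`, the metric is that of the real line, in the coordinate `ρ`
  set ρ : T → ℝ := fun w => dist (γ 0) w
  have hρ : ∀ r ∈ Icc (0:ℝ) 1, ∀ r' ∈ Icc (0:ℝ) 1,
      dist (p.extend r) (p.extend r') = |ρ (p.extend r) - ρ (p.extend r')| := by
    intro r hr r' hr'
    obtain ⟨s, hs, hsr⟩ : p.extend r ∈ γ '' Icc 0 1 := himg ▸ mem_image_of_mem _ hr
    obtain ⟨s', hs', hsr'⟩ : p.extend r' ∈ γ '' Icc 0 1 := himg ▸ mem_image_of_mem _ hr'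
    simp only [ρ, ← hsr, ← hsr', hγ s hs s' hs', hγ.dist_left hs, hγ.dist_left hs', ← sub_mul,
      abs_mul, abs_of_nonneg (dist_nonneg (x := γ 0))]
  have hmono : StrictMonoOn (ρ ∘ p.extend) (Icc 0 1) ∨ StrictAntiOn (ρ ∘ p.extend) (Icc 0 1) :=
    ((continuous_const.dist continuous_id).comp_continuousOn
      p.continuous_extend.continuousOn).strictMonoOn_of_injOn_Icc' zero_le_one
      fun r hr r' hr' h => hinj hr hr' (dist_eq_zero.1 ((hρ r hr r' hr').trans (by
        simp only [Function.comp_apply] at h; rw [h, sub_self, abs_zero])))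
  have hab' : (a : ℝ) ≤ b := hab
  have hbc' : (b : ℝ) ≤ c := hbc
  rw [← p.extend_extends' a, ← p.extend_extends' b, ← p.extend_extends' c,
    hρ _ a.2 _ b.2, hρ _ b.2 _ c.2, hρ _ a.2 _ c.2]
  rcases hmono with hmono | hmono
  · have h1 := hmono.monotoneOn a.2 b.2 hab'
    have h2 := hmono.monotoneOn b.2 c.2 hbc'
    simp only [Function.comp_apply] at h1 h2
    rw [abs_of_nonpos (by linarith), abs_of_nonpos (by linarith), abs_of_nonpos (by linarith)]
    ring
  · have h1 := hmono.antitoneOn a.2 b.2 hab'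
    have h2 := hmono.antitoneOn b.2 c.2 hbc'
    simp only [Function.comp_apply] at h1 h2
    rw [abs_of_nonneg (by linarith), abs_of_nonneg (by linarith), abs_of_nonneg (by linarith)]
    ring

lemma dist_eq_add_of_inter_subset (hT : IsRTree T) {σ τ : ℝ → T} (hσ : IsGeodesic σ)
    (hτ : IsGeodesic τ) (h : σ 1 = τ 0)
    (hsep : ∀ s ∈ Icc (0:ℝ) 1, σ s ∈ τ '' Icc 0 1 → σ s = σ 1) :
    dist (σ 0) (τ 1) = dist (σ 0) (σ 1) + dist (τ 0) (τ 1) := by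
  rcases eq_or_ne (σ 0) (σ 1) with hσc | hσne
  · rw [hσc, h, dist_self, zero_add]
  rcases eq_or_ne (τ 0) (τ 1) with hτc | hτne
  · rw [← hτc, ← h, dist_self, add_zero]
  have hmeet : ∀ s ∈ Icc (0:ℝ) 1, ∀ r ∈ Icc (0:ℝ) 1, σ s = τ r → s = 1 ∧ r = 0 := by
    intro s hs r hr hsr
    have hs1 : σ s = σ 1 := hsep s hs ⟨r, hr, hsr.symm⟩
    exact ⟨hσ.injOn hσne hs (right_mem_Icc.2 zero_le_one) hs1,
      hτ.injOn hτne hr (left_mem_Icc.2 zero_le_one) (hsr.symm.trans (hs1.trans h))⟩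
  -- the concatenation of `σ` and `τ` is a simple path
  set p := hσ.toPath.trans (hτ.toPath.cast h rfl)
  have hp_apply : ∀ t : unitInterval, p t = if (t : ℝ) ≤ 1 / 2 then σ (2 * t) else τ (2 * t - 1) :=
    fun t => by rw [Path.trans_apply]; split_ifs <;> rfl
  have hp : Function.Injective p := by
    intro a b hab
    have ha := a.2
    have hb := b.2
    rw [hp_apply, hp_apply] at hab
    apply Subtype.ext
    split_ifs at hab with ha' hb' hb'
    · have := hσ.injOn hσne ⟨by linarith [ha.1], by linarith⟩ ⟨by linarith [hb.1], by linarith⟩ hab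
      linarith
    · have := hmeet _ ⟨by linarith [ha.1], by linarith⟩ _ ⟨by linarith, by linarith [hb.2]⟩ hab
      linarith
    · have := hmeet _ ⟨by linarith [hb.1], by linarith⟩ _ ⟨by linarith, by linarith [ha.2]⟩ hab.symm
      linarith
    · have := hτ.injOn hτne ⟨by linarith, by linarith [ha.2]⟩ ⟨by linarith, by linarith [hb.2]⟩ hab
      linarith
  have hhalf : (1 / 2 : ℝ) ∈ unitInterval := ⟨by norm_num, by norm_num⟩
  have key := hT.dist_add_dist_of_injective p hp (a := 0) (b := ⟨1 / 2, hhalf⟩) (c := 1)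
    (Subtype.mk_le_mk.2 hhalf.1) (Subtype.mk_le_mk.2 hhalf.2)
  rw [p.source, p.target, hp_apply, if_pos le_rfl] at key
  norm_num at key
  rw [← key, h]

lemma exists_dist_geodesic_eq (hT : IsRTree T) {γ : ℝ → T} (hγ : IsGeodesic γ) (z : T) :
    ∃ u ∈ Icc (0:ℝ) 1, ∀ s ∈ Icc (0:ℝ) 1,
      dist z (γ s) = dist z (γ u) + |u - s| * dist (γ 0) (γ 1) := by
  obtain ⟨σ, hσ, hσ0, hσ1⟩ := hT.1 z (γ 0)
  -- `σ s₀` is the first point of `σ` on the image of `γ`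
  set S := Icc (0:ℝ) 1 ∩ σ ⁻¹' (γ '' Icc 0 1)
  have hS : IsClosed S := hσ.continuousOn.preimage_isClosed_of_isClosed isClosed_Icc
    (isCompact_Icc.image_of_continuousOn hγ.continuousOn).isClosed
  have hSne : S.Nonempty :=
    ⟨1, right_mem_Icc.2 zero_le_one, 0, left_mem_Icc.2 zero_le_one, hσ1.symm⟩
  have hSbdd : BddBelow S := ⟨0, fun s hs => hs.1.1⟩
  set s₀ := sInf S
  obtain ⟨hs₀, u, hu, hγu⟩ : s₀ ∈ S := hS.csInf_mem hSne hSbdd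
  refine ⟨u, hu, fun s hs => ?_⟩
  have key := hT.dist_eq_add_of_inter_subset (hσ.comp_lineMap (left_mem_Icc.2 zero_le_one) hs₀)
    (hγ.comp_lineMap hu hs) (by simp [hγu]) (fun r hr hmem => ?_)
  · simpa [hσ0, ← hγu, hγ u hu s hs] using key
  have hr' : AffineMap.lineMap 0 s₀ r ∈ S := by
    refine ⟨(convex_Icc 0 1).lineMap_mem (left_mem_Icc.2 zero_le_one) hs₀ hr, ?_⟩
    obtain ⟨r', hr', hr'eq⟩ := hmem
    exact ⟨_, (convex_Icc 0 1).lineMap_mem hu hs hr', hr'eq⟩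
  have hle : s₀ ≤ r * s₀ := by
    simpa [AffineMap.lineMap_apply_ring'] using csInf_le hSbdd hr'
  have : r * s₀ = s₀ := le_antisymm (mul_le_of_le_one_left hs₀.1 hr.2) hle
  simp [AffineMap.lineMap_apply_ring', this]

lemma dist_geodesic_sq_le (hT : IsRTree T) {γ : ℝ → T} (hγ : IsGeodesic γ) (z : T) {t : ℝ}
    (ht : t ∈ Icc (0:ℝ) 1) :
    dist z (γ t) ^ 2 ≤ (1 - t) * dist z (γ 0) ^ 2 + t * dist z (γ 1) ^ 2
      - t * (1 - t) * dist (γ 0) (γ 1) ^ 2 := by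
  obtain ⟨u, hu, hdist⟩ := hT.exists_dist_geodesic_eq hγ z
  rw [hdist t ht, hdist 0 (left_mem_Icc.2 zero_le_one), hdist 1 (right_mem_Icc.2 zero_le_one),
    sub_zero, abs_of_nonneg hu.1, abs_of_nonpos (sub_nonpos.2 hu.2)]
  have habs := abs_sub_le_of_mem_Icc hu ht
  nlinarith [mul_le_mul_of_nonneg_left habs
    (mul_nonneg dist_nonneg dist_nonneg : 0 ≤ dist z (γ u) * dist (γ 0) (γ 1)), sq_abs (u - t)]

lemma dist_geodesic_le (hT : IsRTree T) {γ : ℝ → T} (hγ : IsGeodesic γ) (z : T) {t : ℝ}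
    (ht : t ∈ Icc (0:ℝ) 1) :
    dist z (γ t) ≤ (1 - t) * dist z (γ 0) + t * dist z (γ 1) := by
  obtain ⟨u, hu, hdist⟩ := hT.exists_dist_geodesic_eq hγ z
  rw [hdist t ht, hdist 0 (left_mem_Icc.2 zero_le_one), hdist 1 (right_mem_Icc.2 zero_le_one),
    sub_zero, abs_of_nonneg hu.1, abs_of_nonpos (sub_nonpos.2 hu.2)]
  have habs := abs_sub_le_of_mem_Icc hu ht
  nlinarith [mul_le_mul_of_nonneg_right habs (dist_nonneg : 0 ≤ dist (γ 0) (γ 1))]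

lemma dist_geodesic_geodesic_le (hT : IsRTree T) {γ γ' : ℝ → T} (hγ : IsGeodesic γ)
    (hγ' : IsGeodesic γ') {t : ℝ} (ht : t ∈ Icc (0:ℝ) 1) :
    dist (γ t) (γ' t) ≤ (1 - t) * dist (γ 0) (γ' 0) + t * dist (γ 1) (γ' 1) := by
  obtain ⟨u, hu, hdist⟩ := hT.exists_dist_geodesic_eq hγ (γ' t)
  have h0 := hT.dist_geodesic_le hγ' (γ 0) ht
  have h1 := hT.dist_geodesic_le hγ' (γ 1) ht
  have e0 := hdist 0 (left_mem_Icc.2 zero_le_one)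
  have e1 := hdist 1 (right_mem_Icc.2 zero_le_one)
  have tri0 := dist_triangle (γ 0) (γ 1) (γ' 1)
  have tri1 := dist_triangle (γ 1) (γ 0) (γ' 0)
  rw [dist_comm, hdist t ht]
  rw [dist_comm (γ 0) (γ' t)] at h0
  rw [dist_comm (γ 1) (γ' t)] at h1
  rw [dist_comm (γ 1) (γ 0)] at tri1
  rcases le_total t u with htu | hut
  · rw [abs_of_nonneg (sub_nonneg.2 htu)]
    rw [sub_zero, abs_of_nonneg hu.1] at e0
    nlinarith [mul_le_mul_of_nonneg_left tri0 ht.1]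
  · rw [abs_of_nonpos (sub_nonpos.2 hut)]
    rw [abs_of_nonpos (sub_nonpos.2 hu.2)] at e1
    nlinarith [mul_le_mul_of_nonneg_left tri1 (sub_nonneg.2 ht.2)]

/-- The geodesic from `x` to `y`; by `IsRTree.eq_geodesic` it is the only one. -/
noncomputable def geodesic (hT : IsRTree T) (x y : T) : ℝ → T := (hT.1 x y).choose

lemma isGeodesic_geodesic (hT : IsRTree T) (x y : T) : IsGeodesic (hT.geodesic x y) :=
  (hT.1 x y).choose_spec.1

@[simp]
lemma geodesic_zero (hT : IsRTree T) (x y : T) : hT.geodesic x y 0 = x :=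
  (hT.1 x y).choose_spec.2.1

@[simp]
lemma geodesic_one (hT : IsRTree T) (x y : T) : hT.geodesic x y 1 = y :=
  (hT.1 x y).choose_spec.2.2

lemma eq_geodesic (hT : IsRTree T) {γ : ℝ → T} (hγ : IsGeodesic γ) {t : ℝ}
    (ht : t ∈ Icc (0:ℝ) 1) : γ t = hT.geodesic (γ 0) (γ 1) t := by
  simpa using hT.dist_geodesic_geodesic_le hγ (hT.isGeodesic_geodesic (γ 0) (γ 1)) ht

lemma dist_geodesic_apply_le (hT : IsRTree T) (x y x' y' : T) {t : ℝ}
    (ht : t ∈ Icc (0:ℝ) 1) :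
    dist (hT.geodesic x y t) (hT.geodesic x' y' t) ≤ (1 - t) * dist x x' + t * dist y y' := by
  simpa using hT.dist_geodesic_geodesic_le (hT.isGeodesic_geodesic x y)
    (hT.isGeodesic_geodesic x' y') ht

lemma one_div_add_two_mem_Icc (k : ℕ) : (1 : ℝ) / (k + 2) ∈ Icc (0:ℝ) 1 :=
  ⟨by positivity, (div_le_one (by positivity)).2 (by linarith [(k.cast_nonneg : (0:ℝ) ≤ k)])⟩

/-- The inductive mean `sₖ₊₁` of `k + 1` points, built from a fixed choice of geodesics. -/
noncomputable def inductiveMean (hT : IsRTree T) : (k : ℕ) → (Fin (k + 1) → T) → T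
  | 0, x => x 0
  | k + 1, x => hT.geodesic (inductiveMean hT k (Fin.init x)) (x (Fin.last (k + 1))) (1 / (k + 2))

lemma inductiveMean_succ (hT : IsRTree T) (k : ℕ) (x : Fin (k + 2) → T) :
    hT.inductiveMean (k + 1) x =
      hT.geodesic (hT.inductiveMean k (Fin.init x)) (x (Fin.last (k + 1))) (1 / (k + 2)) :=
  rfl

lemma _root_.IsInductiveMean.eq_inductiveMean (hT : IsRTree T) {k : ℕ} {x : Fin (k + 1) → T}
    {s : T} (h : IsInductiveMean k x s) : s = hT.inductiveMean k x := by
  induction k generalizing s with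
  | zero => exact h
  | succ k ih =>
    obtain ⟨s', hs', γ, hγ, hγ0, hγ1, rfl⟩ := h
    rw [hT.eq_geodesic hγ (one_div_add_two_mem_Icc k), hγ0, hγ1, ih hs']
    rfl

lemma lipschitzWith_inductiveMean (hT : IsRTree T) (k : ℕ) :
    LipschitzWith 1 (hT.inductiveMean k) := by
  induction k with
  | zero => exact LipschitzWith.eval 0
  | succ k ih =>
    refine LipschitzWith.of_dist_le_mul fun x y => ?_
    have ht := one_div_add_two_mem_Icc k
    have hinit : dist (hT.inductiveMean k (Fin.init x)) (hT.inductiveMean k (Fin.init y))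
        ≤ dist x y :=
      (ih.dist_le_mul _ _).trans (by
        rw [NNReal.coe_one, one_mul]
        exact (dist_pi_le_iff dist_nonneg).2 fun i => dist_le_pi_dist x y (Fin.castSucc i))
    have hlast := dist_le_pi_dist x y (Fin.last (k + 1))
    rw [NNReal.coe_one, one_mul, inductiveMean_succ, inductiveMean_succ]
    nlinarith [hT.dist_geodesic_apply_le (hT.inductiveMean k (Fin.init x))
      (x (Fin.last (k + 1))) (hT.inductiveMean k (Fin.init y)) (y (Fin.last (k + 1))) ht,
      ht.1, ht.2]

lemma dist_inductiveMean_le (hT : IsRTree T) {k : ℕ} {x : Fin (k + 1) → T} {z : T} {R : ℝ}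
    (h : ∀ i, dist z (x i) ≤ R) : dist z (hT.inductiveMean k x) ≤ R := by
  induction k with
  | zero => exact h 0
  | succ k ih =>
    have ht := one_div_add_two_mem_Icc k
    rw [inductiveMean_succ]
    have := hT.dist_geodesic_le (hT.isGeodesic_geodesic (hT.inductiveMean k (Fin.init x))
      (x (Fin.last (k + 1)))) z ht
    simp only [geodesic_zero, geodesic_one] at this
    nlinarith [ih (x := Fin.init x) fun i => h _, h (Fin.last (k + 1)), ht.1, ht.2]

end IsRTree

section Support

variable {N : Type*} [MetricSpace N] [MeasurableSpace N] [SecondCountableTopology N]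

lemma ae_mem_msupport (ν : Measure N) : ∀ᵐ y ∂ν, y ∈ msupport ν := by
  refine measure_null_of_locally_null _ fun x hx => ?_
  obtain ⟨ε, hε, hball⟩ : ∃ ε > 0, ν (ball x ε) = 0 := by
    simpa [msupport] using hx
  exact ⟨ball x ε, mem_nhdsWithin_of_mem_nhds (ball_mem_nhds x hε), hball⟩

lemma exists_ae_dist_le_of_diam_msupport_le (ν : Measure N) [NeZero ν] {D : ℝ}
    (hD : Metric.ediam (msupport ν) ≤ ENNReal.ofReal D) :
    ∃ x₀, ∀ᵐ y ∂ν, dist x₀ y ≤ |D| := by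
  obtain ⟨x₀, hx₀⟩ := (ae_mem_msupport ν).exists
  refine ⟨x₀, (ae_mem_msupport ν).mono fun y hy => ?_⟩
  have h := (Metric.edist_le_ediam_of_mem hx₀ hy).trans (hD.trans (ENNReal.ofReal_le_ofReal
    (le_abs_self D)))
  rwa [edist_dist, ENNReal.ofReal_le_ofReal_iff (abs_nonneg D)] at h

end Support

lemma integrable_dist_sq_of_ae_dist_le {X N : Type*} [MeasurableSpace X] [MetricSpace N]
    [MeasurableSpace N] [OpensMeasurableSpace N] {μ : Measure X} [IsFiniteMeasure μ]
    {F : X → N} (hF : AEMeasurable F μ) {x₀ : N} {R : ℝ} (hR : ∀ᵐ x ∂μ, dist x₀ (F x) ≤ R)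
    (p : N) : Integrable (fun x => dist p (F x) ^ 2) μ := by
  refine Integrable.of_bound
    (((continuous_const.dist continuous_id).pow 2).measurable.comp_aemeasurable
      hF).aestronglyMeasurable ((dist p x₀ + R) ^ 2) (hR.mono fun x hx => ?_)
  rw [Real.norm_of_nonneg (sq_nonneg _)]
  exact pow_le_pow_left₀ dist_nonneg ((dist_triangle p x₀ (F x)).trans (by linarith)) 2

def IsBarycenter {N : Type*} [MetricSpace N] [MeasurableSpace N] (ν : Measure N) (b : N) : Prop :=
  ∀ x, ∫ y, dist b y ^ 2 ∂ν ≤ ∫ y, dist x y ^ 2 ∂ν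

namespace IsBarycenter

variable {T : Type*} [MetricSpace T] [MeasurableSpace T] {ν : Measure T} [IsProbabilityMeasure ν]
  {b x₀ : T} {R : ℝ}

lemma integral_dist_sq_le (hb : IsBarycenter ν b) (hR : ∀ᵐ y ∂ν, dist x₀ y ≤ R) :
    ∫ y, dist b y ^ 2 ∂ν ≤ R ^ 2 :=
  (hb x₀).trans <| by
    simpa using integral_mono_of_nonneg (ae_of_all _ fun y => sq_nonneg _)
      (integrable_const (R ^ 2)) (hR.mono fun y hy => pow_le_pow_left₀ dist_nonneg hy 2)

/-- The variance inequality. -/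
lemma integral_add_dist_sq_le [OpensMeasurableSpace T] (hT : IsRTree T) (hb : IsBarycenter ν b)
    (hR : ∀ᵐ y ∂ν, dist x₀ y ≤ R) (p : T) :
    ∫ y, dist b y ^ 2 ∂ν + dist b p ^ 2 ≤ ∫ y, dist p y ^ 2 ∂ν := by
  set V := ∫ y, dist b y ^ 2 ∂ν
  set W := ∫ y, dist p y ^ 2 ∂ν
  have hint : ∀ q, Integrable (fun y => dist q y ^ 2) ν :=
    integrable_dist_sq_of_ae_dist_le aemeasurable_id hR
  have key : ∀ t ∈ Ioc (0:ℝ) 1, V + (1 - t) * dist b p ^ 2 ≤ W := by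
    intro t ht
    have hint' : Integrable (fun y => (1 - t) * dist b y ^ 2 + t * dist p y ^ 2) ν :=
      ((hint b).const_mul _).add ((hint p).const_mul _)
    have hmid : V ≤ (1 - t) * V + t * W - t * (1 - t) * dist b p ^ 2 := calc
      V ≤ ∫ y, dist (hT.geodesic b p t) y ^ 2 ∂ν := hb _
      _ ≤ ∫ y, ((1 - t) * dist b y ^ 2 + t * dist p y ^ 2 - t * (1 - t) * dist b p ^ 2) ∂ν :=
          integral_mono_of_nonneg (ae_of_all _ fun y => sq_nonneg _)
            (hint'.sub (integrable_const _))
            (ae_of_all _ fun y => by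
              simpa [dist_comm y] using
                hT.dist_geodesic_sq_le (hT.isGeodesic_geodesic b p) y ⟨ht.1.le, ht.2⟩)
      _ = (1 - t) * V + t * W - t * (1 - t) * dist b p ^ 2 := by
          rw [integral_sub hint' (integrable_const _),
            integral_add ((hint b).const_mul _) ((hint p).const_mul _), integral_const_mul,
            integral_const_mul, integral_const, probReal_univ, one_smul]
    exact le_of_mul_le_mul_left (by nlinarith) ht.1
  have hlim : Tendsto (fun t : ℝ => V + (1 - t) * dist b p ^ 2) (𝓝[>] 0)
      (𝓝 (V + dist b p ^ 2)) := by
    have hcont : Continuous fun t : ℝ => V + (1 - t) * dist b p ^ 2 := by fun_prop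
    simpa using (hcont.tendsto 0).mono_left nhdsWithin_le_nhds
  exact le_of_tendsto hlim (eventually_of_mem (Ioc_mem_nhdsGT zero_lt_one) key)

lemma dist_sq_le (hb : IsBarycenter ν b)
    (hint : ∀ p, Integrable (fun y => dist p y ^ 2) ν) (p : T) :
    dist b p ^ 2 ≤ 4 * ∫ y, dist p y ^ 2 ∂ν := by
  have hpt : ∀ y, dist b p ^ 2 ≤ 2 * dist b y ^ 2 + 2 * dist p y ^ 2 := fun y => by
    nlinarith [dist_triangle_right b p y, sq_nonneg (dist b y - dist p y), dist_nonneg (x := b)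
      (y := p)]
  have hint' : Integrable (fun y => 2 * dist b y ^ 2 + 2 * dist p y ^ 2) ν :=
    ((hint b).const_mul 2).add ((hint p).const_mul 2)
  have hle := integral_mono (integrable_const _) hint' hpt
  rw [integral_const, probReal_univ, one_smul, integral_add ((hint b).const_mul 2)
    ((hint p).const_mul 2), integral_const_mul, integral_const_mul] at hle
  linarith [hb p]

end IsBarycenter

namespace IsRTree

variable {T : Type*} [MetricSpace T] [MeasurableSpace T] {ν : Measure T} [IsProbabilityMeasure ν]

lemma measurable_inductiveMean [BorelSpace T] [SecondCountableTopology T] (hT : IsRTree T)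
    (k : ℕ) : Measurable (hT.inductiveMean k) :=
  (hT.lipschitzWith_inductiveMean k).continuous.measurable

lemma ae_dist_inductiveMean_le (hT : IsRTree T) {x₀ : T} {R : ℝ}
    (hR : ∀ᵐ y ∂ν, dist x₀ y ≤ R) (k : ℕ) :
    ∀ᵐ x ∂(Measure.pi fun _ : Fin (k + 1) => ν), dist x₀ (hT.inductiveMean k x) ≤ R :=
  (ae_all_iff.2 fun _ => Measure.tendsto_eval_ae_ae.eventually hR).mono
    fun _ hx => hT.dist_inductiveMean_le hx

lemma integrable_dist_sq_inductiveMean [BorelSpace T] [SecondCountableTopology T]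
    (hT : IsRTree T) {x₀ : T} {R : ℝ} (hR : ∀ᵐ y ∂ν, dist x₀ y ≤ R) (k : ℕ) (p : T) :
    Integrable (fun x => dist p (hT.inductiveMean k x) ^ 2)
      (Measure.pi fun _ : Fin (k + 1) => ν) :=
  integrable_dist_sq_of_ae_dist_le (hT.measurable_inductiveMean k).aemeasurable
    (hT.ae_dist_inductiveMean_le hR k) p

lemma integral_comp_inductiveMean_succ (hT : IsRTree T) (k : ℕ) {f : T → ℝ}
    (hf : Integrable (fun x => f (hT.inductiveMean (k + 1) x))
      (Measure.pi fun _ : Fin (k + 2) => ν)) :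
    ∫ x, f (hT.inductiveMean (k + 1) x) ∂(Measure.pi fun _ : Fin (k + 2) => ν) =
      ∫ x, ∫ y, f (hT.geodesic (hT.inductiveMean k x) y (1 / (k + 2))) ∂ν
        ∂(Measure.pi fun _ : Fin (k + 1) => ν) := by
  set e := (MeasurableEquiv.piFinSuccAbove (fun _ : Fin (k + 2) => T) (Fin.last (k + 1))).symm
  have he : MeasurePreserving e (ν.prod (Measure.pi fun _ : Fin (k + 1) => ν))
      (Measure.pi fun _ : Fin (k + 2) => ν) :=
    (measurePreserving_piFinSuccAbove (fun _ : Fin (k + 2) => ν) (Fin.last (k + 1))).symm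
  have hf' : Integrable (fun z => f (hT.inductiveMean (k + 1) (e z)))
      (ν.prod (Measure.pi fun _ : Fin (k + 1) => ν)) :=
    (he.integrable_comp_emb e.measurableEmbedding).2 hf
  rw [← he.integral_comp', integral_prod_symm _ hf']
  simp [e, inductiveMean_succ, Fin.snocEquiv]

lemma integral_dist_sq_geodesic_le [OpensMeasurableSpace T] (hT : IsRTree T) {b x₀ : T} {R : ℝ}
    (hb : IsBarycenter ν b) (hR : ∀ᵐ y ∂ν, dist x₀ y ≤ R) (s : T) {t : ℝ} (ht : t ∈ Icc (0:ℝ) 1) :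
    ∫ y, dist b (hT.geodesic s y t) ^ 2 ∂ν ≤
      (1 - t) ^ 2 * dist b s ^ 2 + t ^ 2 * ∫ y, dist b y ^ 2 ∂ν := by
  have hint : ∀ q, Integrable (fun y => dist q y ^ 2) ν :=
    integrable_dist_sq_of_ae_dist_le aemeasurable_id hR
  have hint' : Integrable (fun y => (1 - t) * dist b s ^ 2 + t * dist b y ^ 2) ν :=
    (integrable_const _).add ((hint b).const_mul _)
  have hmono : ∫ y, dist b (hT.geodesic s y t) ^ 2 ∂ν ≤
      ∫ y, ((1 - t) * dist b s ^ 2 + t * dist b y ^ 2 - t * (1 - t) * dist s y ^ 2) ∂ν :=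
    integral_mono_of_nonneg (ae_of_all _ fun y => sq_nonneg _)
      (hint'.sub ((hint s).const_mul _))
      (ae_of_all _ fun y => by
        simpa using hT.dist_geodesic_sq_le (hT.isGeodesic_geodesic s y) b ht)
  rw [integral_sub hint' ((hint s).const_mul _), integral_add (integrable_const _)
    ((hint b).const_mul _), integral_const, probReal_univ, one_smul, integral_const_mul,
    integral_const_mul] at hmono
  have hvar := hb.integral_add_dist_sq_le hT hR s
  nlinarith [mul_le_mul_of_nonneg_left hvar (mul_nonneg ht.1 (sub_nonneg.2 ht.2))]

/-- Sturm's inequality. -/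
theorem integral_dist_sq_inductiveMean_le [BorelSpace T] [SecondCountableTopology T]
    (hT : IsRTree T) {b x₀ : T} {R : ℝ} (hb : IsBarycenter ν b) (hR : ∀ᵐ y ∂ν, dist x₀ y ≤ R)
    (k : ℕ) :
    ∫ x, dist b (hT.inductiveMean k x) ^ 2 ∂(Measure.pi fun _ : Fin (k + 1) => ν) ≤
      (∫ y, dist b y ^ 2 ∂ν) / (k + 1) := by
  set V := ∫ y, dist b y ^ 2 ∂ν with hV
  induction k with
  | zero =>
    rw [Nat.cast_zero, zero_add (1 : ℝ), div_one, hV,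
      ← (measurePreserving_funUnique ν (Fin 1)).integral_comp']
    rfl
  | succ k ih =>
    have ht := one_div_add_two_mem_Icc k
    set t : ℝ := 1 / (k + 2)
    calc ∫ x, dist b (hT.inductiveMean (k + 1) x) ^ 2 ∂(Measure.pi fun _ : Fin (k + 2) => ν)
        = ∫ x, ∫ y, dist b (hT.geodesic (hT.inductiveMean k x) y t) ^ 2 ∂ν
            ∂(Measure.pi fun _ : Fin (k + 1) => ν) :=
          hT.integral_comp_inductiveMean_succ k (f := fun z => dist b z ^ 2)
            (hT.integrable_dist_sq_inductiveMean hR _ b)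
      _ ≤ ∫ x, ((1 - t) ^ 2 * dist b (hT.inductiveMean k x) ^ 2 + t ^ 2 * V)
            ∂(Measure.pi fun _ : Fin (k + 1) => ν) :=
          integral_mono_of_nonneg (ae_of_all _ fun _ => integral_nonneg fun _ => sq_nonneg _)
            (((hT.integrable_dist_sq_inductiveMean hR k b).const_mul _).add (integrable_const _))
            (ae_of_all _ fun x => hT.integral_dist_sq_geodesic_le hb hR _ ht)
      _ = (1 - t) ^ 2 * ∫ x, dist b (hT.inductiveMean k x) ^ 2
            ∂(Measure.pi fun _ : Fin (k + 1) => ν) + t ^ 2 * V := by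
          rw [integral_add ((hT.integrable_dist_sq_inductiveMean hR k b).const_mul _)
            (integrable_const _), integral_const_mul, integral_const, probReal_univ, one_smul]
      _ ≤ (1 - t) ^ 2 * (V / (k + 1)) + t ^ 2 * V := by gcongr
      _ = V / ((k + 1 : ℕ) + 1) := by
          simp only [t]
          push_cast
          field_simp
          ring

end IsRTree

theorem dist_expectation_inductiveMean_barycenter_sq_le_general
    {T : Type*} [MetricSpace T] (hT : IsRTree T)
    [MeasurableSpace T] [BorelSpace T] [SecondCountableTopology T]
    (ν : Measure T) [IsProbabilityMeasure ν]
    (D : ℝ) (hD : EMetric.diam (msupport ν) ≤ ENNReal.ofReal D)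
    (b : T) (hb : ∀ x : T, ∫ y, dist b y ^ 2 ∂ν ≤ ∫ y, dist x y ^ 2 ∂ν)
    (n : ℕ) (sn : (Fin (n+1) → T) → T)
    (hmean : ∀ x, IsInductiveMean n x (sn x))
    (bn : T)
    (hbn : ∀ x : T, ∫ y, dist bn y ^ 2 ∂((Measure.pi fun _ : Fin (n+1) => ν).map sn) ≤
      ∫ y, dist x y ^ 2 ∂((Measure.pi fun _ : Fin (n+1) => ν).map sn)) :
    dist bn b ^ 2 ≤ 4 * D ^ 2 / (n+1 : ℝ) := by
  obtain ⟨x₀, hR⟩ := exists_ae_dist_le_of_diam_msupport_le ν hD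
  obtain rfl : sn = hT.inductiveMean n := funext fun x => (hmean x).eq_inductiveMean hT
  have hmeas := (hT.measurable_inductiveMean n).aemeasurable (μ := Measure.pi fun _ => ν)
  have hcont : ∀ p : T, Continuous fun y => dist p y ^ 2 := fun p => by fun_prop
  have hint : ∀ p, Integrable (fun y => dist p y ^ 2)
      ((Measure.pi fun _ : Fin (n+1) => ν).map (hT.inductiveMean n)) := fun p =>
    (integrable_map_measure (hcont p).aestronglyMeasurable hmeas).2
      (hT.integrable_dist_sq_inductiveMean hR n p)
  have : IsProbabilityMeasure ((Measure.pi fun _ : Fin (n+1) => ν).map (hT.inductiveMean n)) :=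
    Measure.isProbabilityMeasure_map hmeas
  calc dist bn b ^ 2
      ≤ 4 * ∫ y, dist b y ^ 2 ∂((Measure.pi fun _ : Fin (n+1) => ν).map (hT.inductiveMean n)) :=
        IsBarycenter.dist_sq_le hbn hint b
    _ = 4 * ∫ x, dist b (hT.inductiveMean n x) ^ 2 ∂(Measure.pi fun _ : Fin (n+1) => ν) := by
        rw [integral_map hmeas (hcont b).aestronglyMeasurable]
    _ ≤ 4 * ((∫ y, dist b y ^ 2 ∂ν) / (n + 1)) := by
        gcongr
        exact hT.integral_dist_sq_inductiveMean_le hb hR n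
    _ ≤ 4 * (|D| ^ 2 / (n + 1)) := by
        gcongr
        exact IsBarycenter.integral_dist_sq_le hb hR
    _ = 4 * D ^ 2 / (n + 1 : ℝ) := by rw [sq_abs, mul_div_assoc]

/-- If `ν` has support of diameter at most `D` in an ℝ-tree `T`, `b` is the barycenter
of `ν` and `bₙ` the barycenter of the pushforward of `ν^⊗n` under the inductive-mean
map `sₙ`, then `aₙ² = d(bₙ, b)² ≤ 4D²/n`. -/
theorem dist_expectation_inductiveMean_barycenter_sq_le
    {T : Type*} [MetricSpace T] [CompleteSpace T] (hT : IsRTree T)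
    [MeasurableSpace T] [BorelSpace T] [SecondCountableTopology T]
    (ν : Measure T) [IsProbabilityMeasure ν]
    (D : ℝ) (hD : EMetric.diam (msupport ν) ≤ ENNReal.ofReal D)
    (b : T) (hb : ∀ x : T, ∫ y, dist b y ^ 2 ∂ν ≤ ∫ y, dist x y ^ 2 ∂ν)
    (n : ℕ) (sn : (Fin (n+1) → T) → T) (hsn : Measurable sn)
    (hmean : ∀ x, IsInductiveMean n x (sn x))
    (bn : T)
    (hbn : ∀ x : T, ∫ y, dist bn y ^ 2 ∂((Measure.pi fun _ : Fin (n+1) => ν).map sn) ≤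
      ∫ y, dist x y ^ 2 ∂((Measure.pi fun _ : Fin (n+1) => ν).map sn)) :
    dist bn b ^ 2 ≤ 4 * D ^ 2 / (n+1 : ℝ) :=
  dist_expectation_inductiveMean_barycenter_sq_le_general hT ν D hD b hb n sn hmean bn hbn
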